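/- arXiv:1703.08386 — 2 statements merged into one kernel-verified Lean document; each statement's English description precedes it below -/
import Mathlib

section
/- For all real ξ with 0 < ξ < 1 and all real μ₂ with μ₂ ≠ 0, one has |arctan(ξ(μ₂+1)) − arctan(ξ(μ₂−1))| < arctan(2ξ/(1−ξ²)). -/
theorem stmt_1 (ξ μ₂ : ℝ) (hξ0 : 0 < ξ) (hξ1 : ξ < 1) (hμ : μ₂ ≠ 0) :
    |Real.arctan (ξ * (μ₂ + 1)) - Real.arctan (ξ * (μ₂ - 1))| <
      Real.arctan (2 * ξ / (1 - ξ ^ 2)) := by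
  have hξ2 : (0:ℝ) < 1 - ξ ^ 2 := by nlinarith
  have hμ2 : 0 < μ₂ ^ 2 := by positivity
  have hab : ξ * (μ₂ + 1) * (ξ * (μ₂ - 1)) = ξ ^ 2 * (μ₂ ^ 2 - 1) := by ring
  have h1 : ξ * (μ₂ + 1) * -(ξ * (μ₂ - 1)) < 1 := by nlinarith
  have hdiff : Real.arctan (ξ * (μ₂ + 1)) - Real.arctan (ξ * (μ₂ - 1)) =
      Real.arctan (2 * ξ / (1 + ξ ^ 2 * (μ₂ ^ 2 - 1))) := by
    have := Real.arctan_add h1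
    rw [Real.arctan_neg] at this
    rw [sub_eq_add_neg, this]
    congr 1
    field_simp
    ring
  have hpos : 0 < Real.arctan (ξ * (μ₂ + 1)) - Real.arctan (ξ * (μ₂ - 1)) := by
    have : ξ * (μ₂ - 1) < ξ * (μ₂ + 1) := by nlinarith
    have := Real.arctan_strictMono this
    linarith
  rw [abs_of_pos hpos, hdiff]
  apply Real.arctan_strictMono
  have hden : (0:ℝ) < 1 + ξ ^ 2 * (μ₂ ^ 2 - 1) := by nlinarith
  apply div_lt_div_of_pos_left (by linarith) hξ2
  nlinarith [mul_pos (pow_pos hξ0 2) hμ2]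
end

section
/- For F̂' > 0 and d̂ > 0, define μ₁(λ) = −1 + F̂'·λ²/(3(1 + d̂λ²)) − λ²/3 for λ ≥ 0, assuming F̂' > 1. Then μ₁ attains its maximum over λ ≥ 0 at λ² = (√F̂' − 1)/d̂, and sup_{λ ≥ 0} μ₁(λ) > 0 if and only if F̂' > (1 + √(3d̂))². -/
/-!
Writing `x = λ²` and `s = √F̂'`, the gap between the candidate maximum `-1 + (s - 1)² / (3 d̂)`
and `μ₁` is the perfect square `(1 + d̂ x - s)² / (3 d̂ (1 + d̂ x))`, which vanishes exactly when
`1 + d̂ x = s`. Positivity of the maximum is then `3 d̂ < (s - 1)²`, i.e. `1 + √(3 d̂) < s`.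
-/

open Real

namespace KellerSegel

/-- The growth rate `μ₁` as a function of `x = λ²`. -/
noncomputable def growthRate (F d x : ℝ) : ℝ :=
  -1 + F * x / (3 * (1 + d * x)) - x / 3

noncomputable def maxGrowthRate (F d : ℝ) : ℝ :=
  -1 + (√F - 1) ^ 2 / (3 * d)

theorem maxGrowthRate_sub_growthRate {F d x : ℝ} (hF : 0 ≤ F) (hd : d ≠ 0)
    (hx : 1 + d * x ≠ 0) :
    maxGrowthRate F d - growthRate F d x = (1 + d * x - √F) ^ 2 / (3 * d * (1 + d * x)) := by
  have hs : √F ^ 2 = F := sq_sqrt hF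
  unfold maxGrowthRate growthRate
  field_simp
  linear_combination d * x * hs

theorem growthRate_le_maxGrowthRate {F d x : ℝ} (hF : 0 ≤ F) (hd : 0 < d) (hx : 0 ≤ x) :
    growthRate F d x ≤ maxGrowthRate F d := by
  have hpos : 0 < 1 + d * x := by positivity
  have hgap := maxGrowthRate_sub_growthRate hF hd.ne' hpos.ne'
  have : 0 ≤ (1 + d * x - √F) ^ 2 / (3 * d * (1 + d * x)) := by positivity
  linarith

theorem growthRate_sqrt_sub_one_div {F d : ℝ} (hF : 0 < F) (hd : 0 < d) :
    growthRate F d ((√F - 1) / d) = maxGrowthRate F d := by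
  have hx : 1 + d * ((√F - 1) / d) = √F := by field_simp; ring
  have hgap := maxGrowthRate_sub_growthRate hF.le hd.ne' (x := (√F - 1) / d)
    (by rw [hx]; exact (sqrt_pos.mpr hF).ne')
  rw [hx, sub_self, zero_pow two_ne_zero, zero_div] at hgap
  linarith

theorem maxGrowthRate_pos_iff {F d : ℝ} (hF : 1 < F) (hd : 0 < d) :
    0 < maxGrowthRate F d ↔ (1 + √(3 * d)) ^ 2 < F := by
  have hs : 0 < √F - 1 := by
    rw [sub_pos, lt_sqrt zero_le_one, one_pow]
    exact hF
  calc 0 < maxGrowthRate F d ↔ 3 * d < (√F - 1) ^ 2 := by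
        rw [maxGrowthRate, neg_add_eq_sub, sub_pos, one_lt_div (by positivity)]
    _ ↔ √(3 * d) < √F - 1 := (sqrt_lt' hs).symm
    _ ↔ 1 + √(3 * d) < √F := by constructor <;> intro h <;> linarith
    _ ↔ (1 + √(3 * d)) ^ 2 < F := lt_sqrt (by positivity)

end KellerSegel

open KellerSegel in
theorem stmt_12_general (F d : ℝ) (hd : 0 < d) (hF1 : 1 < F)
    (μ₁ : ℝ → ℝ)
    (hμ : μ₁ = fun lam : ℝ => -1 + F * lam ^ 2 / (3 * (1 + d * lam ^ 2)) - lam ^ 2 / 3)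
    (lamstar : ℝ) (hstar : lamstar = Real.sqrt ((Real.sqrt F - 1) / d)) :
    (∀ lam : ℝ, 0 ≤ lam → μ₁ lam ≤ μ₁ lamstar) ∧
    (0 < μ₁ lamstar ↔ F > (1 + Real.sqrt (3 * d)) ^ 2) := by
  have hF : 0 < F := zero_lt_one.trans hF1
  have hμ' : ∀ lam, μ₁ lam = growthRate F d (lam ^ 2) := fun lam => by rw [hμ]; rfl
  have hx : 0 ≤ (√F - 1) / d := div_nonneg (by rw [sub_nonneg, one_le_sqrt]; exact hF1.le) hd.le
  have hmax : μ₁ lamstar = maxGrowthRate F d := by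
    rw [hμ', hstar, sq_sqrt hx, growthRate_sqrt_sub_one_div hF hd]
  refine ⟨fun lam _ => ?_, ?_⟩
  · rw [hmax, hμ']
    exact growthRate_le_maxGrowthRate hF.le hd (sq_nonneg lam)
  · rw [hmax, gt_iff_lt]
    exact maxGrowthRate_pos_iff hF1 hd

theorem stmt_12 (F d : ℝ) (hF : 0 < F) (hd : 0 < d) (hF1 : 1 < F)
    (μ₁ : ℝ → ℝ)
    (hμ : μ₁ = fun lam : ℝ => -1 + F * lam ^ 2 / (3 * (1 + d * lam ^ 2)) - lam ^ 2 / 3)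
    (lamstar : ℝ) (hstar : lamstar = Real.sqrt ((Real.sqrt F - 1) / d)) :
    (∀ lam : ℝ, 0 ≤ lam → μ₁ lam ≤ μ₁ lamstar) ∧
    (0 < μ₁ lamstar ↔ F > (1 + Real.sqrt (3 * d)) ^ 2) :=
  stmt_12_general F d hd hF1 μ₁ hμ lamstar hstar
end
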